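/- Let G be a strongly connected digraph whose vertex set is partitioned into k sets C_1, C_2, ..., C_k such that each induced subgraph G[C_i] is strongly connected. Then the number of strong bridges (u,v) of G whose endpoints lie in different parts of the partition (u ∈ C_i, v ∈ C_j with i ≠ j) is at most 2(k-1). -/

import Mathlib

/-!  Basic notions for finite directed graphs given by an edge set `E : Set (V × V)`. -/

variable {V : Type*}

/-- A path from `u` to `v`: a nonempty list of vertices starting at `u`, ending at `v`,
in which every pair of consecutive vertices is an edge. -/
def IsPath (E : Set (V × V)) (u v : V) (p : List V) : Prop :=
  p.Chain' (fun a b => (a, b) ∈ E) ∧ p.head? = some u ∧ p.getLast? = some v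

/-- `v` is reachable from `u` by a path. -/
def Reach (E : Set (V × V)) (u v : V) : Prop := ∃ p, IsPath E u v p

/-- Every vertex reaches every other vertex. -/
def StronglyConnected (E : Set (V × V)) : Prop := ∀ u v, Reach E u v

/-- An edge `e` is a strong bridge if its removal destroys strong connectivity. -/
def StrongBridge (E : Set (V × V)) (e : V × V) : Prop :=
  e ∈ E ∧ ¬ StronglyConnected (E \ {e})

/-- `u` dominates `v` in the flow graph with start vertex `s`:
every path from `s` to `v` contains `u`. -/
def Dominates (E : Set (V × V)) (s u v : V) : Prop :=
  ∀ p, IsPath E s v p → u ∈ p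

/-- An edge `e = (e.1, e.2)` is a bridge of the flow graph `G_s`:
every path from `s` to `e.2` contains the edge `e`. -/
def FlowBridge (E : Set (V × V)) (s : V) (e : V × V) : Prop :=
  e ∈ E ∧ ∀ p, IsPath E s e.2 p → [e.1, e.2] <:+: p

/-- The reverse digraph: all edges reversed. -/
def rev (E : Set (V × V)) : Set (V × V) := {e | (e.2, e.1) ∈ E}

/-- `D(v)`: the set of vertices dominated by `v` in `G_s`. -/
def Dset (E : Set (V × V)) (s v : V) : Set V := {w | Dominates E s v w}

/-- Reachability inside the induced subgraph `G[S]`: a path all of whose vertices lie in `S`. -/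
def ReachableIn (E : Set (V × V)) (S : Set V) (u v : V) : Prop :=
  ∃ p, IsPath E u v p ∧ ∀ w ∈ p, w ∈ S

/-- `C` is a strongly connected component of the induced subgraph `G[S]`. -/
def SCCIn (E : Set (V × V)) (S : Set V) (C : Set V) : Prop :=
  C.Nonempty ∧ C ⊆ S ∧
  (∀ u ∈ C, ∀ v ∈ C, ReachableIn E S u v) ∧
  (∀ v ∈ S, ∀ u ∈ C, ReachableIn E S u v → ReachableIn E S v u → v ∈ C)

/-- A bridge-dominated component: an SCC of `G[D(v)]` for some bridge `(u,v)` of `G_s`. -/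
def BridgeDomComponent (E : Set (V × V)) (s : V) (C : Set V) : Prop :=
  ∃ u v, FlowBridge E s (u, v) ∧ SCCIn E (Dset E s v) C

/-- The set of edges used by a path `p`. -/
def pathEdges (p : List V) : Set (V × V) := {e | [e.1, e.2] <:+: p}

/-- `u` and `v` are `2`-edge-connected: there are two edge-disjoint paths from `u` to `v`
and two edge-disjoint paths from `v` to `u`. -/
def TwoEdgeConnected (E : Set (V × V)) (u v : V) : Prop :=
  (∃ p q, IsPath E u v p ∧ IsPath E u v q ∧ pathEdges p ∩ pathEdges q = ∅) ∧
  (∃ p q, IsPath E v u p ∧ IsPath E v u q ∧ pathEdges p ∩ pathEdges q = ∅)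

/-- `u` is the immediate dominator of `v` in `G_s`: a proper dominator of `v`
dominated by every proper dominator of `v`. -/
def ImmDom (E : Set (V × V)) (s u v : V) : Prop :=
  Dominates E s u v ∧ u ≠ v ∧
  ∀ w, Dominates E s w v → w ≠ v → Dominates E s w u

/-- `depth v = |Dom(v)|`, the number of dominators of `v` in `G_s`. -/
noncomputable def depth (E : Set (V × V)) (s v : V) : ℕ :=
  {u | Dominates E s u v}.ncard

/-- `z` is the nearest common ancestor of `x` and `y` in the dominator tree of `G_s`:
a common dominator of `x` and `y` dominated by every common dominator. -/
def IsNCA (E : Set (V × V)) (s x y z : V) : Prop :=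
  Dominates E s z x ∧ Dominates E s z y ∧
  ∀ w, Dominates E s w x → Dominates E s w y → Dominates E s w z

/-- `r` is the bridge-decomposition root of `v` in `G_s`: the deepest dominator `r`
of `v` such that `r = s` or `(d(r), r)` is a bridge of `G_s`. -/
def IsBDRoot (E : Set (V × V)) (s v r : V) : Prop :=
  Dominates E s r v ∧
  (r = s ∨ ∃ u, ImmDom E s u r ∧ FlowBridge E s (u, r)) ∧
  ∀ r', Dominates E s r' v →
    (r' = s ∨ ∃ u', ImmDom E s u' r' ∧ FlowBridge E s (u', r')) →
    Dominates E s r' r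

/-!
Fix a vertex `s`. Every strong bridge is a bridge of the flow graph `G_s` or, reversed, of the
flow graph of the reverse digraph. Let `(u, v)` be a bridge of `G_s` entering a part `C`
(`u ∉ C`, `v ∈ C`), and let `P` be a path from `s` that stops when it first meets `C`. Extending
`P` inside `G[C]` to `v` gives a path that must contain `(u, v)`, and the only place it can do
so is the last edge of `P`. Hence at most one bridge of `G_s` enters each part, and none enters
the part of `s`: there are at most `k - 1` crossing bridges in each direction.
-/

theorem List.getLast?_eq_and_head?_eq_of_pair_infix_append {α : Type*} {a b : α}
    {l₁ l₂ : List α} (h : [a, b] <:+: l₁ ++ l₂) (ha : a ∉ l₂) (hb : b ∉ l₁) :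
    l₁.getLast? = some a ∧ l₂.head? = some b := by
  induction l₁ with
  | nil => exact absurd (h.subset (by simp)) ha
  | cons c l₁ ih =>
    rcases List.infix_cons_iff.mp h with ⟨t, ht⟩ | hinf
    · simp only [List.cons_append, List.nil_append, List.cons.injEq] at ht
      obtain ⟨rfl, ht⟩ := ht
      cases l₁ with
      | nil => exact ⟨rfl, by rw [← show b :: t = l₂ from ht]; rfl⟩
      | cons d l₁ => exact absurd (by simp_all) hb
    · obtain ⟨hl, hh⟩ := ih hinf (fun hb' => hb (List.mem_cons_of_mem _ hb'))
      cases l₁ with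
      | nil => simp at hl
      | cons d l₁ => exact ⟨by simpa [List.getLast?_cons_cons] using hl, hh⟩

section Paths

variable {V : Type*} {E : Set (V × V)} {u v w : V} {p q : List V}

theorem IsPath.ne_nil (h : IsPath E u v p) : p ≠ [] := by
  rintro rfl
  simp [IsPath] at h

theorem IsPath.cons (hp : IsPath E v w p) (huv : (u, v) ∈ E) : IsPath E u w (u :: p) := by
  obtain ⟨hc, hh, hl⟩ := hp
  cases p with
  | nil => simp at hh
  | cons x p =>
    obtain rfl : x = v := by simpa using hh
    exact ⟨List.isChain_cons_cons.mpr ⟨huv, hc⟩, rfl, by simpa [List.getLast?_cons_cons] using hl⟩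

theorem IsPath.append (hp : IsPath E u v p) (hq : IsPath E v w q) :
    IsPath E u w (p ++ q.tail) := by
  obtain ⟨hc, hh, hl⟩ := hp
  obtain ⟨hc', hh', hl'⟩ := hq
  rcases q with _ | ⟨x, _ | ⟨y, q⟩⟩
  · simp at hh'
  · obtain rfl : x = v := by simpa using hh'
    obtain rfl : x = w := by simpa using hl'
    rw [List.tail_cons, List.append_nil]
    exact ⟨hc, hh, hl⟩
  · obtain rfl : x = v := by simpa using hh'
    refine ⟨hc.append hc'.tail ?_, ?_, ?_⟩
    · intro a ha b hb
      obtain rfl : x = a := by simpa [hl] using ha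
      obtain rfl : y = b := by simpa using hb
      exact (List.isChain_cons_cons.mp hc').1
    · rw [List.head?_append, hh]
      rfl
    · simpa [List.getLast?_append, List.getLast?_cons_cons] using hl'

theorem IsPath.rev (h : IsPath E u v p) : IsPath (rev E) v u p.reverse := by
  obtain ⟨hc, hh, hl⟩ := h
  exact ⟨List.isChain_reverse.mpr (hc.imp fun _ _ hab => hab), by rwa [List.head?_reverse],
    by rwa [List.getLast?_reverse]⟩

theorem IsPath.sdiff_singleton {a b : V} (hp : IsPath E u v p) (hab : ¬ [a, b] <:+: p) :
    IsPath (E \ {(a, b)}) u v p := by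
  refine ⟨List.isChain_iff_forall_rel_of_append_cons_cons.mpr ?_, hp.2⟩
  rintro x y l₁ l₂ rfl
  refine ⟨List.isChain_iff_forall_rel_of_append_cons_cons.mp hp.1 rfl, ?_⟩
  rintro ⟨⟩
  exact hab ⟨l₁, l₂, by simp⟩

theorem Reach.refl (u : V) : Reach E u u := ⟨[u], List.isChain_singleton u, rfl, rfl⟩

theorem Reach.trans (huv : Reach E u v) (hvw : Reach E v w) : Reach E u w := by
  obtain ⟨p, hp⟩ := huv
  obtain ⟨q, hq⟩ := hvw
  exact ⟨_, hp.append hq⟩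

theorem Reach.rev (h : Reach E u v) : Reach (rev E) v u := by
  obtain ⟨p, hp⟩ := h
  exact ⟨_, hp.rev⟩

theorem ReachableIn.rev {S : Set V} (h : ReachableIn E S u v) : ReachableIn (rev E) S v u := by
  obtain ⟨p, hp, hpS⟩ := h
  exact ⟨p.reverse, hp.rev, fun x hx => hpS x (List.mem_reverse.mp hx)⟩

theorem rev_sdiff_singleton (E : Set (V × V)) (e : V × V) : rev (E \ {e}) = rev E \ {e.swap} := by
  ext x
  simp [rev, Prod.ext_iff, and_comm]

/-- Cut the path after its last use of `(a, b)`. -/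
theorem Reach.sdiff_singleton_or {a b : V} (h : Reach E u w) :
    Reach (E \ {(a, b)}) u w ∨ Reach (E \ {(a, b)}) b w := by
  obtain ⟨p, hp⟩ := h
  induction p generalizing u with
  | nil => exact absurd rfl hp.ne_nil
  | cons x p ih =>
    obtain rfl : x = u := by simpa using hp.2.1
    rcases p with _ | ⟨y, p⟩
    · obtain rfl : x = w := by simpa using hp.2.2
      exact Or.inl (Reach.refl x)
    have hxy : (x, y) ∈ E := (List.isChain_cons_cons.mp hp.1).1
    have hyw : IsPath E y w (y :: p) :=
      ⟨(List.isChain_cons_cons.mp hp.1).2, rfl, by simpa [List.getLast?_cons_cons] using hp.2.2⟩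
    rcases ih hyw with ⟨r, hr⟩ | hbw
    · by_cases hxy_eq : (x, y) = (a, b)
      · obtain ⟨-, rfl⟩ := Prod.ext_iff.mp hxy_eq
        exact Or.inr ⟨r, hr⟩
      · exact Or.inl ⟨x :: r, hr.cons ⟨hxy, hxy_eq⟩⟩
    · exact Or.inr hbw

end Paths

section FlowBridges

variable {V : Type*} {E : Set (V × V)} {s : V}

theorem flowBridge_of_not_reach_sdiff {a b y : V} (hab : (a, b) ∈ E) (hsy : Reach E s y)
    (hny : ¬ Reach (E \ {(a, b)}) s y) : FlowBridge E s (a, b) := by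
  have hby : Reach (E \ {(a, b)}) b y := hsy.sdiff_singleton_or.resolve_left hny
  refine ⟨hab, fun p hp => ?_⟩
  by_contra hn
  exact hny (Reach.trans ⟨p, hp.sdiff_singleton hn⟩ hby)

theorem StrongBridge.flowBridge_or_flowBridge_rev {e : V × V} (hSC : StronglyConnected E)
    (hb : StrongBridge E e) : FlowBridge E s e ∨ FlowBridge (rev E) s e.swap := by
  obtain ⟨he, hns⟩ := hb
  obtain ⟨x, y, hxy⟩ : ∃ x y, ¬ Reach (E \ {e}) x y := by
    simpa [StronglyConnected] using hns
  by_cases hsy : Reach (E \ {e}) s y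
  · have hxs : ¬ Reach (rev (E \ {e})) s x := fun h =>
      hxy ((h.rev : Reach (E \ {e}) x s).trans hsy)
    rw [rev_sdiff_singleton] at hxs
    exact Or.inr (flowBridge_of_not_reach_sdiff he (hSC x s).rev hxs)
  · exact Or.inl (flowBridge_of_not_reach_sdiff he (hSC s y) hsy)

theorem FlowBridge.not_reachableIn {S : Set V} {e : V × V} (hb : FlowBridge E s e)
    (he : e.1 ∉ S) : ¬ ReachableIn E S s e.2 := by
  rintro ⟨p, hp, hpS⟩
  exact he (hpS _ ((hb.2 p hp).subset (by simp)))

theorem Reach.exists_entry_path {S : Set V} {v : V} (h : Reach E s v) (hv : v ∈ S) :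
    ∃ α x, IsPath E s x (α ++ [x]) ∧ x ∈ S ∧ ∀ w ∈ α, w ∉ S := by
  classical
  obtain ⟨p, hp⟩ := h
  obtain ⟨x, hx⟩ := Option.isSome_iff_exists.mp <| (List.find?_isSome (p := fun w => decide (w ∈ S))).mpr
    ⟨v, List.mem_of_getLast? hp.2.2, decide_eq_true hv⟩
  obtain ⟨hxS, α, β, rfl, hα⟩ := List.find?_eq_some_iff_append.mp hx
  refine ⟨α, x, ⟨hp.1.prefix ⟨β, by simp⟩, ?_, by simp⟩, of_decide_eq_true hxS,
    fun w hw => by simpa using hα w hw⟩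
  simpa [List.head?_append] using hp.2.1

theorem FlowBridge.eq_last_edge_of_entry_path {S : Set V} {α : List V} {x : V} {e : V × V}
    (hS : ∀ a ∈ S, ∀ b ∈ S, ReachableIn E S a b) (hP : IsPath E s x (α ++ [x]))
    (hα : ∀ w ∈ α, w ∉ S) (hx : x ∈ S) (hb : FlowBridge E s e) (he₁ : e.1 ∉ S) (he₂ : e.2 ∈ S) :
    α.getLast? = some e.1 ∧ x = e.2 := by
  obtain ⟨q, hq, hqS⟩ := hS x hx e.2 he₂
  have hq_eq : (α ++ [x]) ++ q.tail = α ++ q := by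
    rcases q with _ | ⟨y, q⟩
    · exact absurd rfl hq.ne_nil
    · obtain rfl : y = x := by simpa using hq.2.1
      simp
  have hpath := hb.2 _ (hP.append hq)
  rw [hq_eq] at hpath
  obtain ⟨hlast, hhead⟩ := List.getLast?_eq_and_head?_eq_of_pair_infix_append hpath
    (fun h => he₁ (hqS _ h)) (fun h => hα _ h he₂)
  exact ⟨hlast, Option.some_inj.mp (hq.2.1.symm.trans hhead)⟩

theorem ncard_flowBridges_between_parts_le {ι : Type*} [Finite ι] (C : ι → Set V) {i₀ : ι}
    (hs : s ∈ C i₀) (hreach : ∀ v, Reach E s v) (hcover : ∀ x : V, ∃ i, x ∈ C i)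
    (hdisj : ∀ i j, i ≠ j → Disjoint (C i) (C j))
    (hCsc : ∀ i, ∀ a ∈ C i, ∀ b ∈ C i, ReachableIn E (C i) a b) :
    {e : V × V | FlowBridge E s e ∧ ∃ i j, i ≠ j ∧ e.1 ∈ C i ∧ e.2 ∈ C j}.ncard
      ≤ Nat.card ι - 1 := by
  choose part hpart using hcover
  have part_eq : ∀ x i, x ∈ C i → part x = i := fun x i hx =>
    by_contra fun h => (hdisj _ _ h).ne_of_mem (hpart x) hx rfl
  have not_mem : ∀ x i j, x ∈ C i → i ≠ j → x ∉ C j := fun x i j hx hij hxj =>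
    (hdisj i j hij).ne_of_mem hx hxj rfl
  calc _ ≤ ({i₀}ᶜ : Set ι).ncard := by
        refine Set.ncard_le_ncard_of_injOn (fun e => part e.2) ?_ ?_
        · rintro e ⟨hb, i, j, hij, he₁, he₂⟩ hj
          rw [Set.mem_singleton_iff, part_eq _ _ he₂] at hj
          subst hj
          exact hb.not_reachableIn (not_mem _ _ _ he₁ hij) (hCsc _ s hs e.2 he₂)
        · rintro e ⟨hb, i, j, hij, he₁, he₂⟩ e' ⟨hb', i', j', hij', he₁', he₂'⟩ hpart_eq
          simp only [part_eq _ _ he₂, part_eq _ _ he₂'] at hpart_eq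
          subst hpart_eq
          obtain ⟨α, x, hP, hx, hα⟩ := (hreach e.2).exists_entry_path he₂
          obtain ⟨h₁, h₂⟩ := hb.eq_last_edge_of_entry_path (hCsc j) hP hα hx
            (not_mem _ _ _ he₁ hij) he₂
          obtain ⟨h₁', h₂'⟩ := hb'.eq_last_edge_of_entry_path (hCsc j) hP hα hx
            (not_mem _ _ _ he₁' hij') he₂'
          exact Prod.ext (Option.some_inj.mp (h₁.symm.trans h₁')) (h₂.symm.trans h₂')
    _ = Nat.card ι - 1 := by rw [Set.ncard_compl, Set.ncard_singleton]

end FlowBridges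

theorem stmt15_general {V : Type*} [Fintype V] (E : Set (V × V)) (k : ℕ) (C : Fin k → Set V)
    (hSC : StronglyConnected E)
    (hcover : ∀ x : V, ∃ i, x ∈ C i)
    (hdisj : ∀ i j, i ≠ j → Disjoint (C i) (C j))
    (hCsc : ∀ i, ∀ a ∈ C i, ∀ b ∈ C i, ReachableIn E (C i) a b) :
    {e : V × V | StrongBridge E e ∧
      ∃ i j, i ≠ j ∧ e.1 ∈ C i ∧ e.2 ∈ C j}.ncard ≤ 2 * (k - 1) := by
  rcases isEmpty_or_nonempty V with hV | ⟨⟨s⟩⟩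
  · simp [Set.eq_empty_of_isEmpty]
  obtain ⟨i₀, hs⟩ := hcover s
  set A := {e : V × V | FlowBridge E s e ∧ ∃ i j, i ≠ j ∧ e.1 ∈ C i ∧ e.2 ∈ C j}
  set B := {e : V × V | FlowBridge (rev E) s e ∧ ∃ i j, i ≠ j ∧ e.1 ∈ C i ∧ e.2 ∈ C j}
  have hA : A.ncard ≤ k - 1 := by
    simpa using ncard_flowBridges_between_parts_le C hs (hSC s) hcover hdisj hCsc
  have hB : B.ncard ≤ k - 1 := by
    simpa using ncard_flowBridges_between_parts_le C hs (fun v => (hSC v s).rev) hcover hdisj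
      fun i a ha b hb => (hCsc i b hb a ha).rev
  calc _ ≤ (A ∪ Prod.swap '' B).ncard := by
        refine Set.ncard_le_ncard ?_
        rintro e ⟨hb, i, j, hij, he₁, he₂⟩
        rcases hb.flowBridge_or_flowBridge_rev (s := s) hSC with h | h
        · exact Or.inl ⟨h, i, j, hij, he₁, he₂⟩
        · exact Or.inr ⟨e.swap, ⟨h, j, i, hij.symm, he₂, he₁⟩, e.swap_swap⟩
    _ ≤ A.ncard + (Prod.swap '' B).ncard := Set.ncard_union_le _ _
    _ = A.ncard + B.ncard := by rw [Set.ncard_image_of_injective _ Prod.swap_injective]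
    _ ≤ 2 * (k - 1) := by omega

/-- if the vertex set is partitioned into `k` sets inducing strongly
connected subgraphs, then at most `2(k-1)` strong bridges have endpoints in
different parts. -/
theorem stmt15 {V : Type*} [Fintype V] (E : Set (V × V)) (k : ℕ) (C : Fin k → Set V)
    (hSC : StronglyConnected E)
    (hne : ∀ i, (C i).Nonempty)
    (hcover : ∀ x : V, ∃ i, x ∈ C i)
    (hdisj : ∀ i j, i ≠ j → Disjoint (C i) (C j))
    (hCsc : ∀ i, ∀ a ∈ C i, ∀ b ∈ C i, ReachableIn E (C i) a b) :
    {e : V × V | StrongBridge E e ∧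
      ∃ i j, i ≠ j ∧ e.1 ∈ C i ∧ e.2 ∈ C j}.ncard ≤ 2 * (k - 1) :=
  stmt15_general E k C hSC hcover hdisj hCsc
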